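/- arXiv:2405.17887 — 2 statements merged into one kernel-verified Lean document; each statement's English description precedes it below -/
import Mathlib

section
/- Let F and F' be totally real number fields of degree n, both realized as subfields of ℝ (so that the inclusion map is one of the n real embeddings of each field), and suppose F ≠ F'. Then the images of the Hilbert modular groups Γ_F and Γ_{F'} in GL₂⁺(ℝ)ⁿ (embedded via the n real embeddings, with the inclusion embedding placed first) are not conjugate in GL₂⁺(ℝ)ⁿ; that is, there is no A ∈ GL₂⁺(ℝ)ⁿ with A Γ_F A⁻¹ = Γ_{F'}. -/
open NumberField Matrix nonZeroDivisors

/-- The Hilbert modular group `Γ_F = Γ₀(𝒪, 𝒪)` of a number field `F`, viewed as the set of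
`2 × 2` matrices `(a b; c d)` with entries in `F` such that `a, d ∈ 𝒪`, `b ∈ 𝔡⁻¹`, `c ∈ 𝔡`
(where `𝔡` is the different ideal) and totally positive unit determinant. -/
noncomputable def HilbertGamma (F : Type*) [Field F] [NumberField F] :
    Set (Matrix (Fin 2) (Fin 2) F) :=
  {γ | γ 0 0 ∈ (algebraMap (𝓞 F) F).range ∧ γ 1 1 ∈ (algebraMap (𝓞 F) F).range ∧
    γ 0 1 ∈ (↑(differentIdeal ℤ (𝓞 F)) : FractionalIdeal (𝓞 F)⁰ F)⁻¹ ∧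
    γ 1 0 ∈ (↑(differentIdeal ℤ (𝓞 F)) : FractionalIdeal (𝓞 F)⁰ F) ∧
    (∃ ε : (𝓞 F)ˣ, algebraMap (𝓞 F) F ε = γ.det) ∧
    (∀ τ : F →+* ℝ, 0 < τ γ.det)}

/-- The image of the Hilbert modular group of a subfield `F ⊆ ℝ` inside
`GL₂⁺(ℝ)ⁿ ⊆ (M₂(ℝ))ⁿ`, obtained by applying a family `e` of real embeddings of `F`
entrywise. -/
noncomputable def HilbertGammaImage (F : Subfield ℝ) [NumberField ↥F] {n : ℕ}
    (e : Fin n → (↥F →+* ℝ)) : Set (Fin n → Matrix (Fin 2) (Fin 2) ℝ) :=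
  {g | ∃ γ ∈ HilbertGamma ↥F, ∀ i, g i = (e i).mapMatrix γ}

/-! The trace is invariant under conjugation and `tr (1 + bc, b; c, 1) = 2 + bc`, so the traces of
`Γ_F` at the inclusion embedding generate `F`: the products `bc` with `b ∈ 𝔡⁻¹`, `c ∈ 𝔡` span
`𝔡⁻¹𝔡 = 𝒪` additively. Conjugate groups thus have the same trace field, forcing `F = F'`. -/

theorem FractionalIdeal.algebraMap_mem_of_forall_mul_mem {R K : Type*} [CommRing R]
    [IsDedekindDomain R] [Field K] [Algebra R K] [IsFractionRing R K]
    {I : FractionalIdeal R⁰ K} (hI : I ≠ 0) {S : AddSubmonoid K}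
    (h : ∀ b ∈ I⁻¹, ∀ c ∈ I, b * c ∈ S) (x : R) : algebraMap R K x ∈ S := by
  have hx : algebraMap R K x ∈ I⁻¹ * I := by
    rw [inv_mul_cancel₀ hI]
    exact (mem_one_iff _).mpr ⟨x, rfl⟩
  exact FractionalIdeal.mul_induction_on hx h fun _ _ ↦ S.add_mem

theorem Matrix.image_trace_image_conj {ι m α : Type*} [Fintype m] [DecidableEq m] [CommRing α]
    (A : ι → Matrix m m α) {i : ι} (hA : IsUnit (A i)) (X : Set (ι → Matrix m m α)) :
    (fun g ↦ (g i).trace) '' ((fun g j ↦ A j * g j * (A j)⁻¹) '' X) =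
      (fun g ↦ (g i).trace) '' X := by
  simp only [Set.image_image, Matrix.trace_conj hA]

theorem NumberField.coe_differentIdeal_ne_zero (F : Type*) [Field F] [NumberField F] :
    (↑(differentIdeal ℤ (𝓞 F)) : FractionalIdeal (𝓞 F)⁰ F) ≠ 0 :=
  FractionalIdeal.coeIdeal_ne_zero.mpr differentIdeal_ne_bot

namespace HilbertGamma

variable {F : Type*} [Field F] [NumberField F]

theorem mem_of_mem_different {b c : F}
    (hb : b ∈ (↑(differentIdeal ℤ (𝓞 F)) : FractionalIdeal (𝓞 F)⁰ F)⁻¹)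
    (hc : c ∈ (↑(differentIdeal ℤ (𝓞 F)) : FractionalIdeal (𝓞 F)⁰ F)) :
    !![1 + b * c, b; c, 1] ∈ HilbertGamma F := by
  have hbc : b * c ∈ (1 : FractionalIdeal (𝓞 F)⁰ F) := by
    simpa [inv_mul_cancel₀ (coe_differentIdeal_ne_zero F)] using
      FractionalIdeal.mul_mem_mul hb hc
  obtain ⟨x, hx⟩ := (FractionalIdeal.mem_one_iff _).mp hbc
  have hdet : (!![1 + b * c, b; c, 1] : Matrix (Fin 2) (Fin 2) F).det = 1 := by
    simp [Matrix.det_fin_two_of]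
  refine ⟨⟨1 + x, by simp [hx]⟩, ⟨1, by simp⟩, by simpa using hb, by simpa using hc,
    ⟨1, by simp [hdet]⟩, fun τ ↦ by simp [hdet]⟩

theorem closure_image_trace : Subfield.closure (Matrix.trace '' HilbertGamma F) = ⊤ := by
  set T := Subfield.closure (Matrix.trace '' HilbertGamma F)
  have hprod : ∀ b ∈ (↑(differentIdeal ℤ (𝓞 F)) : FractionalIdeal (𝓞 F)⁰ F)⁻¹,
      ∀ c ∈ (↑(differentIdeal ℤ (𝓞 F)) : FractionalIdeal (𝓞 F)⁰ F), b * c ∈ T := by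
    intro b hb c hc
    have htr : Matrix.trace !![1 + b * c, b; c, 1] ∈ T :=
      Subfield.subset_closure ⟨_, mem_of_mem_different hb hc, rfl⟩
    have : b * c = Matrix.trace !![1 + b * c, b; c, 1] - 2 := by
      rw [Matrix.trace_fin_two_of]; ring
    rw [this]
    exact sub_mem htr (ofNat_mem T 2)
  have hint : Set.range (algebraMap (𝓞 F) F) ⊆ T := by
    rintro _ ⟨x, rfl⟩
    exact FractionalIdeal.algebraMap_mem_of_forall_mul_mem (S := T.toAddSubmonoid)
      (coe_differentIdeal_ne_zero F) hprod x
  rw [eq_top_iff, ← IsFractionRing.closure_range_algebraMap (𝓞 F) F]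
  exact Subfield.closure_le.mpr hint

end HilbertGamma

theorem Subfield.eq_closure_image_trace_hilbertGamma (F : Subfield ℝ) [NumberField F] :
    F = Subfield.closure (F.subtype '' (Matrix.trace '' HilbertGamma F)) := by
  rw [← RingHom.map_field_closure, HilbertGamma.closure_image_trace,
    ← RingHom.fieldRange_eq_map, Subfield.fieldRange_subtype]

theorem image_trace_hilbertGammaImage (F : Subfield ℝ) [NumberField F] {n : ℕ}
    (e : Fin n → (F →+* ℝ)) (i : Fin n) :
    (fun g ↦ (g i).trace) '' HilbertGammaImage F e = e i '' (Matrix.trace '' HilbertGamma F) := by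
  ext t
  simp only [HilbertGammaImage, Set.mem_image, Set.mem_ofPred_eq]
  constructor
  · rintro ⟨g, ⟨γ, hγ, hg⟩, rfl⟩
    exact ⟨_, ⟨γ, hγ, rfl⟩, by rw [hg, RingHom.mapMatrix_apply, AddMonoidHom.map_trace]⟩
  · rintro ⟨_, ⟨γ, hγ, rfl⟩, rfl⟩
    exact ⟨_, ⟨γ, hγ, fun _ ↦ rfl⟩, by rw [RingHom.mapMatrix_apply, AddMonoidHom.map_trace]⟩

theorem hilbertGamma_not_conjugate_general {n : ℕ} (hn : 0 < n)
    (F F' : Subfield ℝ) [NumberField ↥F] [NumberField ↥F']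
    (e : Fin n ≃ (↥F →+* ℝ)) (e' : Fin n ≃ (↥F' →+* ℝ))
    (he : e ⟨0, hn⟩ = F.subtype) (he' : e' ⟨0, hn⟩ = F'.subtype)
    (hne : F ≠ F') :
    ¬ ∃ A : Fin n → Matrix (Fin 2) (Fin 2) ℝ, (∀ i, 0 < (A i).det) ∧
      (fun g i => A i * g i * (A i)⁻¹) '' HilbertGammaImage F e =
        HilbertGammaImage F' e' := by
  rintro ⟨A, hA, hconj⟩
  have hunit : IsUnit (A ⟨0, hn⟩) := (Matrix.isUnit_iff_isUnit_det _).mpr (hA _).ne'.isUnit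
  have htraces := congrArg (fun X ↦ (fun g ↦ (g ⟨0, hn⟩).trace) '' X) hconj
  simp only [Matrix.image_trace_image_conj A hunit, image_trace_hilbertGammaImage, he, he']
    at htraces
  apply hne
  rw [F.eq_closure_image_trace_hilbertGamma, F'.eq_closure_image_trace_hilbertGamma, htraces]

/-- **Non-conjugacy of Hilbert modular groups of distinct fields.**
If `F ≠ F'` are totally real number fields of degree `n`, realized as subfields of `ℝ`,
then the images of `Γ_F` and `Γ_{F'}` in `GL₂⁺(ℝ)ⁿ` (embedded via the `n` real embeddings,
the inclusion placed first) are not conjugate in `GL₂⁺(ℝ)ⁿ`. -/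
theorem hilbertGamma_not_conjugate {n : ℕ} (hn : 0 < n)
    (F F' : Subfield ℝ) [NumberField ↥F] [NumberField ↥F']
    (htrF : ∀ φ : ↥F →+* ℂ, ComplexEmbedding.IsReal φ)
    (htrF' : ∀ φ : ↥F' →+* ℂ, ComplexEmbedding.IsReal φ)
    (hdegF : Module.finrank ℚ ↥F = n) (hdegF' : Module.finrank ℚ ↥F' = n)
    (e : Fin n ≃ (↥F →+* ℝ)) (e' : Fin n ≃ (↥F' →+* ℝ))
    (he : e ⟨0, hn⟩ = F.subtype) (he' : e' ⟨0, hn⟩ = F'.subtype)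
    (hne : F ≠ F') :
    ¬ ∃ A : Fin n → Matrix (Fin 2) (Fin 2) ℝ, (∀ i, 0 < (A i).det) ∧
      (fun g i => A i * g i * (A i)⁻¹) '' HilbertGammaImage F e =
        HilbertGammaImage F' e' :=
  hilbertGamma_not_conjugate_general hn F F' e e' he he' hne
end

section
/- Let K be a number field and suppose the unit group of its ring of integers contains a subgroup isomorphic to the free abelian group ℤ^r. Then the degree [K : ℚ] is at least r + 1. -/
open NumberField

/-!
A copy of `ℤ^r` inside `(𝓞 K)ˣ` is an injective `ℤ`-linear map `ℤ^r → (𝓞 K)ˣ`, so `r` is at most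
the `ℤ`-rank of the unit group, which by Dirichlet's unit theorem is one less than the number of
infinite places; there are at most `[K : ℚ]` of those.
-/

theorem le_finrank_additive_of_injective {G : Type*} [CommGroup G] [Module.Finite ℤ (Additive G)]
    {r : ℕ} (f : Multiplicative (Fin r → ℤ) →* G) (hf : Function.Injective f) :
    r ≤ Module.finrank ℤ (Additive G) := by
  simpa using LinearMap.finrank_le_finrank_of_injective
    (f := (MonoidHom.toAdditiveRight f).toIntLinearMap) hf

namespace NumberField

variable (K : Type*) [Field K] [NumberField K]

theorem InfinitePlace.card_le_finrank : Fintype.card (InfinitePlace K) ≤ Module.finrank ℚ K := by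
  rw [InfinitePlace.card_eq_nrRealPlaces_add_nrComplexPlaces,
    ← InfinitePlace.card_add_two_mul_card_eq_rank]
  omega

theorem Units.rank_add_one_le_finrank : Units.rank K + 1 ≤ Module.finrank ℚ K := by
  have : 0 < Fintype.card (InfinitePlace K) := Fintype.card_pos
  have := InfinitePlace.card_le_finrank K
  rw [Units.rank]
  omega

end NumberField

/-- If the unit group of the ring of integers of a number field `K` contains a subgroup
isomorphic to the free abelian group `ℤ^r`, then `[K : ℚ] ≥ r + 1`. -/
theorem finrank_ge_of_free_subgroup_of_units (K : Type*) [Field K] [NumberField K] (r : ℕ)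
    (H : Subgroup (𝓞 K)ˣ) (h : Nonempty (H ≃* Multiplicative (Fin r → ℤ))) :
    r + 1 ≤ Module.finrank ℚ K := by
  obtain ⟨e⟩ := h
  have hr : r ≤ Units.rank K := Units.finrank_eq K ▸ le_finrank_additive_of_injective
    (H.subtype.comp e.symm.toMonoidHom) (H.subtype_injective.comp e.symm.injective)
  exact (Nat.succ_le_succ hr).trans (Units.rank_add_one_le_finrank K)
end
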